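/- Let q ∈ ℤ, m ∈ ℕ, a₀ ∈ ℂ \ {0}, a₁,…,aₙ ∈ ℂ, and let g(x,y) := a₀·y^m·∏_{i=1}^n (x·y^q − aᵢ). Let h(x,y) be a bivariate complex polynomial (a Laurent polynomial in y is allowed if q < 0) such that every (i,j) ∈ supp(h) satisfies j > q·i + m. Then there exists ε₀ > 0 such that for every 0 < ε < ε₀ there exists δ > 0 such that for every a ∈ ℂ with 0 < |a| < δ the following holds: if ξ is a nonzero root of the univariate polynomial g(x,a) of multiplicity p, then g(x,a) + h(x,a) has exactly p roots ξ' (counted with multiplicity) satisfying |ξ' − ξ| ≤ ε·|ξ|. -/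

import Mathlib

open scoped Real Classical

/-- The univariate polynomial `g(x,a)` for `g(x,y) = a₀·y^m·∏ᵢ(x·y^q − aᵢ)`
(a Laurent polynomial in `y` when `q < 0`), evaluated at `y := a ≠ 0`. -/
noncomputable def gEval (q : ℤ) (m : ℕ) (a₀ : ℂ) {n : ℕ} (aa : Fin n → ℂ) (a : ℂ) :
    Polynomial ℂ :=
  Polynomial.C (a₀ * a ^ m) *
    ∏ i : Fin n, (Polynomial.C (a ^ q) * Polynomial.X - Polynomial.C (aa i))

/-- The univariate polynomial `h(x,a)` for `h(x,y) = Σ_{(i,j)} c_{ij}·xⁱ·yʲ`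
(with integer, possibly negative, exponents `j` in `y`), evaluated at `y := a ≠ 0`. -/
noncomputable def hEval (c : (ℕ × ℤ) →₀ ℂ) (a : ℂ) : Polynomial ℂ :=
  c.sum fun ij coef => Polynomial.C (coef * a ^ ij.2) * Polynomial.X ^ ij.1

open Polynomial Complex Metric intervalIntegral Real
open scoped Real Classical

noncomputable section auxStmt13

-- CORE

open Polynomial Complex Metric intervalIntegral Real
open scoped Real Classical

noncomputable section

lemma deriv_eval_eq (k : ℂ) (M : Multiset ℂ) (z : ℂ) (hz : ∀ ζ ∈ M, z ≠ ζ) :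
    eval z (derivative (C k * (M.map fun ζ => X - C ζ).prod)) =
      eval z (C k * (M.map fun ζ => X - C ζ).prod) *
        (M.map fun ζ => (z - ζ)⁻¹).sum := by
  induction M using Multiset.induction with
  | empty => simp
  | cons a M ih =>
    have ha : z - a ≠ 0 := sub_ne_zero.2 (hz a (Multiset.mem_cons_self a M))
    have hz' : ∀ ζ ∈ M, z ≠ ζ := fun ζ h => hz ζ (Multiset.mem_cons_of_mem h)
    have h1 : (C k * ((a ::ₘ M).map fun ζ => X - C ζ).prod) =
        (X - C a) * (C k * (M.map fun ζ => X - C ζ).prod) := by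
      rw [Multiset.map_cons, Multiset.prod_cons]; ring
    rw [h1, derivative_mul, Multiset.map_cons, Multiset.sum_cons]
    simp only [derivative_sub, derivative_X, derivative_C, sub_zero, eval_add, eval_mul,
      eval_one, eval_sub, eval_X, eval_C, one_mul]
    rw [ih hz']
    field_simp
    simp only [eval_mul, eval_C]
    ring

end

section Outside

lemma abs_circleMap_sub_center (c : ℂ) {ρ : ℝ} (hρ : 0 < ρ) (θ : ℝ) :
    Norm.norm (circleMap c ρ θ - c) = ρ := by
  rw [circleMap_sub_center, norm_circleMap_zero, abs_of_pos hρ]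

lemma integral_sub_inv_of_outside {c w : ℂ} {ρ : ℝ} (hρ : 0 < ρ)
    (hw : ρ < Norm.norm (w - c)) :
    (∮ z in C(c, ρ), (z - w)⁻¹) = 0 := by
  have hcw : c - w ≠ 0 := by
    intro h
    rw [show w - c = -(c - w) by ring, h] at hw
    simp at hw; linarith
  have hne : ∀ θ : ℝ, circleMap c ρ θ - w ≠ 0 := by
    intro θ h
    have h2 := abs_circleMap_sub_center c hρ θ
    have : circleMap c ρ θ = w := by linear_combination h
    rw [this] at h2
    rw [show w - c = -(c - w) by ring] at hw
    rw [show w - c = -(c - w) by ring] at h2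
    rw [h2] at hw; linarith
  set φ : ℝ → ℂ := fun θ => Complex.log ((circleMap c ρ θ - w) / (c - w)) with hφ
  have key : ∀ θ : ℝ, HasDerivAt φ ((circleMap 0 ρ θ * I) * (circleMap c ρ θ - w)⁻¹) θ := by
    intro θ
    have h1 : HasDerivAt (fun θ => (circleMap c ρ θ - w) / (c - w))
        ((circleMap 0 ρ θ * I) / (c - w)) θ := by
      have := (hasDerivAt_circleMap c ρ θ).sub_const w
      exact this.div_const (c - w)
    have hmem : (circleMap c ρ θ - w) / (c - w) ∈ Complex.slitPlane := by
      have he : (circleMap c ρ θ - w) / (c - w) =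
          1 + (circleMap c ρ θ - c) / (c - w) := by
        field_simp
        simp [circleMap]
        ring
      rw [he]
      apply Complex.mem_slitPlane_of_norm_lt_one
      rw [norm_div]
      rw [div_lt_one (by simpa using (norm_pos_iff.2 hcw))]
      have h2 : Norm.norm (circleMap c ρ θ - c) = ρ := abs_circleMap_sub_center c hρ θ
      have h3 : Norm.norm (c - w) = Norm.norm (w - c) := by
        rw [show c - w = -(w - c) by ring, norm_neg]
      rw [show ‖circleMap c ρ θ - c‖ = Norm.norm (circleMap c ρ θ - c) from rfl,
        show ‖c - w‖ = Norm.norm (c - w) from rfl, h2, h3]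
      exact hw
    have := (Complex.hasDerivAt_log hmem).comp θ h1
    refine HasDerivAt.congr_deriv this ?_
    rw [inv_div, div_mul_div_comm, mul_comm (c - w), mul_div_mul_right _ _ hcw, div_eq_mul_inv]
  have hcont : Continuous fun θ : ℝ => (circleMap 0 ρ θ * I) * (circleMap c ρ θ - w)⁻¹ := by
    apply Continuous.mul ((continuous_circleMap 0 ρ).mul continuous_const)
    exact ((continuous_circleMap c ρ).sub continuous_const).inv₀ hne
  have hFTC : (∫ θ in (0:ℝ)..(2 * π), (circleMap 0 ρ θ * I) * (circleMap c ρ θ - w)⁻¹) =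
      φ (2 * π) - φ 0 :=
    integral_eq_sub_of_hasDerivAt (fun θ _ => key θ) (hcont.intervalIntegrable _ _)
  have hper : φ (2 * π) = φ 0 := by
    simp only [hφ]
    rw [show (2 : ℝ) * π = 0 + 2 * π by ring, periodic_circleMap c ρ 0]
  rw [circleIntegral]
  simp only [deriv_circleMap, smul_eq_mul]
  rw [show (∫ θ in (0:ℝ)..(2 * π), circleMap 0 ρ θ * I * (circleMap c ρ θ - w)⁻¹) =
    φ (2 * π) - φ 0 from hFTC, hper, sub_self]

end Outside

section AP

lemma circleIntegral_add {f g : ℂ → ℂ} {c : ℂ} {R : ℝ} (hf : CircleIntegrable f c R)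
    (hg : CircleIntegrable g c R) :
    (∮ z in C(c, R), (f z + g z)) = (∮ z in C(c, R), f z) + ∮ z in C(c, R), g z := by
  simp only [circleIntegral, smul_add]
  exact intervalIntegral.integral_add hf.out hg.out

lemma continuousOn_inv_sum (M : Multiset ℂ) {c : ℂ} {ρ : ℝ}
    (hM : ∀ ζ ∈ M, Norm.norm (ζ - c) ≠ ρ) :
    ContinuousOn (fun z => (M.map fun ζ => (z - ζ)⁻¹).sum) (Metric.sphere c ρ) := by
  induction M using Multiset.induction with
  | empty => simp [continuousOn_const]
  | cons a M ih =>
    simp only [Multiset.map_cons, Multiset.sum_cons]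
    apply ContinuousOn.add
    · apply ContinuousOn.inv₀ (by fun_prop)
      intro z hz
      rw [mem_sphere_iff_norm] at hz
      intro h
      have : z = a := by linear_combination h
      rw [this] at hz
      exact hM a (Multiset.mem_cons_self a M)
        (by rw [← hz])
    · exact ih (fun ζ h => hM ζ (Multiset.mem_cons_of_mem h))

lemma integral_multiset_inv_sum (M : Multiset ℂ) {c : ℂ} {ρ : ℝ} (hρ : 0 < ρ)
    (hM : ∀ ζ ∈ M, Norm.norm (ζ - c) ≠ ρ) :
    (∮ z in C(c, ρ), (M.map fun ζ => (z - ζ)⁻¹).sum) =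
      2 * π * I * ((M.filter (fun ζ => ζ ∈ Metric.ball c ρ)).card : ℂ) := by
  induction M using Multiset.induction with
  | empty =>
    simp only [Multiset.map_zero, Multiset.sum_zero, Multiset.filter_zero, Multiset.card_zero,
      Nat.cast_zero, mul_zero]
    simp [circleIntegral]
  | cons a M ih =>
    have hM' : ∀ ζ ∈ M, Norm.norm (ζ - c) ≠ ρ := fun ζ h => hM ζ (Multiset.mem_cons_of_mem h)
    have ha := hM a (Multiset.mem_cons_self a M)
    have hint1 : CircleIntegrable (fun z => (z - a)⁻¹) c ρ := by
      apply ContinuousOn.circleIntegrable hρ.le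
      have := continuousOn_inv_sum {a} (by simpa using ha)
      simpa using this
    have hint2 : CircleIntegrable (fun z => (M.map fun ζ => (z - ζ)⁻¹).sum) c ρ :=
      ContinuousOn.circleIntegrable hρ.le (continuousOn_inv_sum M hM')
    have hsplit : (∮ z in C(c, ρ), ((a ::ₘ M).map fun ζ => (z - ζ)⁻¹).sum) =
        (∮ z in C(c, ρ), (z - a)⁻¹) +
          (∮ z in C(c, ρ), (M.map fun ζ => (z - ζ)⁻¹).sum) := by
      rw [← circleIntegral_add hint1 hint2]
      apply circleIntegral.integral_congr hρ.le
      intro z _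
      simp
    rw [hsplit, ih hM']
    by_cases hab : a ∈ Metric.ball c ρ
    · rw [circleIntegral.integral_sub_inv_of_mem_ball hab]
      rw [Multiset.filter_cons_of_pos _ hab]
      push_cast [Multiset.card_cons]
      ring
    · have houts : ρ < Norm.norm (a - c) := by
        rw [Metric.mem_ball, Complex.dist_eq] at hab
        rcases lt_trichotomy (Norm.norm (a - c)) ρ with h | h | h
        · exact absurd h hab
        · exact absurd h ha
        · exact h
      rw [integral_sub_inv_of_outside hρ houts]
      rw [Multiset.filter_cons_of_neg _ hab]
      ring

lemma argument_principle (f : Polynomial ℂ) (hf : f ≠ 0) {c : ℂ} {ρ : ℝ} (hρ : 0 < ρ)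
    (hsph : ∀ z ∈ Metric.sphere c ρ, eval z f ≠ 0) :
    (∮ z in C(c, ρ), eval z (derivative f) / eval z f) =
      2 * π * I * ((f.roots.filter (fun ζ => ζ ∈ Metric.ball c ρ)).card : ℂ) := by
  have hroots : ∀ ζ ∈ f.roots, Norm.norm (ζ - c) ≠ ρ := by
    intro ζ hζ h
    have : ζ ∈ Metric.sphere c ρ := by
      rw [mem_sphere_iff_norm]; exact h
    exact hsph ζ this ((Polynomial.isRoot_of_mem_roots hζ))
  have hfactor := (IsAlgClosed.splits f).eq_prod_roots
  rw [← integral_multiset_inv_sum f.roots hρ hroots]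
  apply circleIntegral.integral_congr hρ.le
  intro z hz
  have hz0 : eval z f ≠ 0 := hsph z hz
  have hzr : ∀ ζ ∈ f.roots, z ≠ ζ := by
    intro ζ hζ h
    rw [h] at hz0
    exact hz0 (Polynomial.isRoot_of_mem_roots hζ)
  have hkey : eval z (derivative f) = eval z f * (f.roots.map fun ζ => (z - ζ)⁻¹).sum := by
    have h2 := deriv_eval_eq f.leadingCoeff f.roots z hzr
    rw [← hfactor] at h2
    exact h2
  simp only [hkey]
  field_simp

end AP

section Rouche

lemma rouche (P Q : Polynomial ℂ) {c : ℂ} {ρ : ℝ} (hρ : 0 < ρ)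
    (hPQ : ∀ z ∈ Metric.sphere c ρ, Norm.norm (eval z Q - eval z P) < Norm.norm (eval z P)) :
    (Q.roots.filter (fun ζ => ζ ∈ Metric.ball c ρ)).card =
      (P.roots.filter (fun ζ => ζ ∈ Metric.ball c ρ)).card := by
  have hsphne : ∀ θ : ℝ, circleMap c ρ θ ∈ Metric.sphere c ρ := fun θ =>
    circleMap_mem_sphere c hρ.le θ
  have hP0 : ∀ z ∈ Metric.sphere c ρ, eval z P ≠ 0 := by
    intro z hz h
    have := hPQ z hz
    rw [h] at this
    simp only [sub_zero, map_zero, norm_zero] at this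
    exact (norm_nonneg _).not_gt this
  have hQ0 : ∀ z ∈ Metric.sphere c ρ, eval z Q ≠ 0 := by
    intro z hz h
    have := hPQ z hz
    rw [h] at this
    simp only [zero_sub, norm_neg] at this
    exact lt_irrefl _ this
  have hPne : P ≠ 0 := fun h => hP0 _ (hsphne 0) (by rw [h]; simp)
  have hQne : Q ≠ 0 := fun h => hQ0 _ (hsphne 0) (by rw [h]; simp)
  -- the two logarithmic integrals agree
  set γ : ℝ → ℂ := circleMap c ρ with hγ
  have hcontQ : Continuous fun θ => circleMap 0 ρ θ * I *
      (eval (γ θ) (derivative Q) / eval (γ θ) Q) := by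
    apply Continuous.mul ((continuous_circleMap 0 ρ).mul continuous_const)
    apply Continuous.div ((Q.derivative.continuous_aeval).comp (continuous_circleMap c ρ))
      ((Q.continuous_aeval).comp (continuous_circleMap c ρ))
    exact fun θ => hQ0 _ (hsphne θ)
  have hcontP : Continuous fun θ => circleMap 0 ρ θ * I *
      (eval (γ θ) (derivative P) / eval (γ θ) P) := by
    apply Continuous.mul ((continuous_circleMap 0 ρ).mul continuous_const)
    apply Continuous.div ((P.derivative.continuous_aeval).comp (continuous_circleMap c ρ))
      ((P.continuous_aeval).comp (continuous_circleMap c ρ))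
    exact fun θ => hP0 _ (hsphne θ)
  set φ : ℝ → ℂ := fun θ => Complex.log (eval (γ θ) Q / eval (γ θ) P) with hφ
  have key : ∀ θ : ℝ, HasDerivAt φ
      (circleMap 0 ρ θ * I * (eval (γ θ) (derivative Q) / eval (γ θ) Q)
        - circleMap 0 ρ θ * I * (eval (γ θ) (derivative P) / eval (γ θ) P)) θ := by
    intro θ
    have hPθ : eval (γ θ) P ≠ 0 := hP0 _ (hsphne θ)
    have hQθ : eval (γ θ) Q ≠ 0 := hQ0 _ (hsphne θ)
    have hγd : HasDerivAt γ (circleMap 0 ρ θ * I) θ := hasDerivAt_circleMap c ρ θ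
    have hQd : HasDerivAt (fun t => eval (γ t) Q)
        (eval (γ θ) (derivative Q) * (circleMap 0 ρ θ * I)) θ :=
      (Polynomial.hasDerivAt Q (γ θ)).comp θ hγd
    have hPd : HasDerivAt (fun t => eval (γ t) P)
        (eval (γ θ) (derivative P) * (circleMap 0 ρ θ * I)) θ :=
      (Polynomial.hasDerivAt P (γ θ)).comp θ hγd
    have hud : HasDerivAt (fun t => eval (γ t) Q / eval (γ t) P)
        ((eval (γ θ) (derivative Q) * (circleMap 0 ρ θ * I) * eval (γ θ) P -
          eval (γ θ) Q * (eval (γ θ) (derivative P) * (circleMap 0 ρ θ * I))) /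
            (eval (γ θ) P) ^ 2) θ := hQd.div hPd hPθ
    have hmem : eval (γ θ) Q / eval (γ θ) P ∈ Complex.slitPlane := by
      have he : eval (γ θ) Q / eval (γ θ) P =
          1 + (eval (γ θ) Q - eval (γ θ) P) / eval (γ θ) P := by
        field_simp
        ring
      rw [he]
      apply Complex.mem_slitPlane_of_norm_lt_one
      rw [norm_div, div_lt_one (by simpa using (norm_pos_iff.2 hPθ))]
      exact hPQ _ (hsphne θ)
    have := (Complex.hasDerivAt_log hmem).comp θ hud
    refine HasDerivAt.congr_deriv this ?_
    field_simp
  have hFTC : (∫ θ in (0:ℝ)..(2 * π),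
      (circleMap 0 ρ θ * I * (eval (γ θ) (derivative Q) / eval (γ θ) Q)
        - circleMap 0 ρ θ * I * (eval (γ θ) (derivative P) / eval (γ θ) P))) =
      φ (2 * π) - φ 0 :=
    integral_eq_sub_of_hasDerivAt (fun θ _ => key θ)
      ((hcontQ.sub hcontP).intervalIntegrable _ _)
  have hper : φ (2 * π) = φ 0 := by
    simp only [hφ, hγ]
    rw [show (2 : ℝ) * π = 0 + 2 * π by ring, periodic_circleMap c ρ 0]
  rw [hper, sub_self] at hFTC
  rw [intervalIntegral.integral_sub (hcontQ.intervalIntegrable _ _)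
    (hcontP.intervalIntegrable _ _), sub_eq_zero] at hFTC
  have hIQ : (∮ z in C(c, ρ), eval z (derivative Q) / eval z Q) =
      ∫ θ in (0:ℝ)..(2 * π), circleMap 0 ρ θ * I * (eval (γ θ) (derivative Q) / eval (γ θ) Q) := by
    simp only [circleIntegral, deriv_circleMap, smul_eq_mul, hγ]
  have hIP : (∮ z in C(c, ρ), eval z (derivative P) / eval z P) =
      ∫ θ in (0:ℝ)..(2 * π), circleMap 0 ρ θ * I * (eval (γ θ) (derivative P) / eval (γ θ) P) := by
    simp only [circleIntegral, deriv_circleMap, smul_eq_mul, hγ]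
  have hAQ := argument_principle Q hQne hρ hQ0
  have hAP := argument_principle P hPne hρ hP0
  have h2 : (2 * (π:ℂ) * I) * ((Q.roots.filter (fun ζ => ζ ∈ Metric.ball c ρ)).card : ℂ) =
      (2 * (π:ℂ) * I) * ((P.roots.filter (fun ζ => ζ ∈ Metric.ball c ρ)).card : ℂ) := by
    rw [← hAQ, ← hAP, hIQ, hIP, hFTC]
  have h2πI : (2 * (π:ℂ) * I) ≠ 0 := by
    simp [Real.pi_ne_zero, Complex.I_ne_zero, Complex.ofReal_ne_zero]
  have := mul_left_cancel₀ h2πI h2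
  exact_mod_cast this

end Rouche


section helpers

lemma gEval_eq (q : ℤ) (m : ℕ) (a₀ : ℂ) {n : ℕ} (aa : Fin n → ℂ) {a : ℂ} (ha : a ≠ 0) :
    gEval q m a₀ aa a =
      C (a₀ * a ^ m * (a ^ q) ^ n) *
        ∏ i : Fin n, (X - C (aa i * (a ^ q)⁻¹)) := by
  have haq : (a : ℂ) ^ q ≠ 0 := zpow_ne_zero q ha
  unfold gEval
  have hfac : ∀ i : Fin n, C (a ^ q) * X - C (aa i) =
      C (a ^ q) * (X - C (aa i * (a ^ q)⁻¹)) := by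
    intro i
    rw [mul_sub, ← C_mul]
    rw [mul_comm (a ^ q) (aa i * (a ^ q)⁻¹), mul_assoc, inv_mul_cancel₀ haq, mul_one]
  calc C (a₀ * a ^ m) * ∏ i : Fin n, (C (a ^ q) * X - C (aa i))
      = C (a₀ * a ^ m) * ∏ i : Fin n, (C (a ^ q) * (X - C (aa i * (a ^ q)⁻¹))) := by
        congr 1; exact Finset.prod_congr rfl fun i _ => hfac i
    _ = C (a₀ * a ^ m * (a ^ q) ^ n) * ∏ i : Fin n, (X - C (aa i * (a ^ q)⁻¹)) := by
        rw [Finset.prod_mul_distrib, Finset.prod_const, ← mul_assoc, ← C_pow, ← C_mul]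
        simp [Finset.card_univ]

lemma gEval_ne_zero (q : ℤ) (m : ℕ) {a₀ : ℂ} (ha₀ : a₀ ≠ 0) {n : ℕ} (aa : Fin n → ℂ)
    {a : ℂ} (ha : a ≠ 0) : gEval q m a₀ aa a ≠ 0 := by
  rw [gEval_eq q m a₀ aa ha]
  apply mul_ne_zero
  · rw [Ne, C_eq_zero]
    exact mul_ne_zero (mul_ne_zero ha₀ (pow_ne_zero _ ha)) (pow_ne_zero _ (zpow_ne_zero q ha))
  · apply Finset.prod_ne_zero_iff.2
    intro i _
    exact X_sub_C_ne_zero _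

lemma gEval_roots (q : ℤ) (m : ℕ) {a₀ : ℂ} (ha₀ : a₀ ≠ 0) {n : ℕ} (aa : Fin n → ℂ)
    {a : ℂ} (ha : a ≠ 0) :
    (gEval q m a₀ aa a).roots =
      Finset.univ.val.map (fun i : Fin n => aa i * (a ^ q)⁻¹) := by
  rw [gEval_eq q m a₀ aa ha]
  rw [roots_C_mul _ (mul_ne_zero (mul_ne_zero ha₀ (pow_ne_zero _ ha))
    (pow_ne_zero _ (zpow_ne_zero q ha)))]
  have : (∏ i : Fin n, (X - C (aa i * (a ^ q)⁻¹))) =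
      ((Finset.univ.val.map (fun i : Fin n => aa i * (a ^ q)⁻¹)).map
        (fun ζ => X - C ζ)).prod := by
    rw [Multiset.map_map]
    rfl
  rw [this, roots_multiset_prod_X_sub_C]

lemma eval_gEval (q : ℤ) (m : ℕ) (a₀ : ℂ) {n : ℕ} (aa : Fin n → ℂ) (a z : ℂ) :
    eval z (gEval q m a₀ aa a) = a₀ * a ^ m * ∏ i : Fin n, (a ^ q * z - aa i) := by
  unfold gEval
  rw [eval_mul, eval_C, eval_prod]
  congr 1
  exact Finset.prod_congr rfl fun i _ => by rw [eval_sub, eval_mul, eval_C, eval_X, eval_C]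

lemma eval_hEval (c : (ℕ × ℤ) →₀ ℂ) (a z : ℂ) :
    eval z (hEval c a) = ∑ ij ∈ c.support, c ij * a ^ ij.2 * z ^ ij.1 := by
  unfold hEval
  rw [Finsupp.sum, eval_finset_sum]
  exact Finset.sum_congr rfl fun ij _ => by rw [eval_mul, eval_pow, eval_C, eval_X]

end helpers


end auxStmt13

set_option maxHeartbeats 2000000 in
/-- Lemma 3 (Rouché-type perturbation): if the support of `h` lies strictly above the line
`j = q·i + m` carrying the support of `g(x,y) = a₀·y^m·∏ᵢ(x·y^q − aᵢ)`, then for every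
sufficiently small `ε > 0` and every `a ≠ 0` of sufficiently small modulus, every nonzero
root `ξ` of `g(x,a)` of multiplicity `p` gives rise to exactly `p` roots `ξ'` of
`g(x,a) + h(x,a)` (with multiplicity) satisfying `|ξ' − ξ| ≤ ε·|ξ|`. -/
theorem stmt13 (q : ℤ) (m : ℕ) (n : ℕ) (a₀ : ℂ) (ha₀ : a₀ ≠ 0) (aa : Fin n → ℂ)
    (c : (ℕ × ℤ) →₀ ℂ) (hc : ∀ ij ∈ c.support, q * (ij.1 : ℤ) + m < ij.2) :
    ∃ ε₀ : ℝ, 0 < ε₀ ∧ ∀ ε : ℝ, 0 < ε → ε < ε₀ →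
      ∃ δ : ℝ, 0 < δ ∧ ∀ a : ℂ, a ≠ 0 → Norm.norm a < δ →
        ∀ ξ : ℂ, ξ ≠ 0 → (gEval q m a₀ aa a).IsRoot ξ →
          ∀ p : ℕ, (gEval q m a₀ aa a).rootMultiplicity ξ = p →
            ((gEval q m a₀ aa a + hEval c a).roots.filter
              (fun ξ' => Norm.norm (ξ' - ξ) ≤ ε * Norm.norm ξ)).card = p := by
  -- global constants
  set B : ℝ := 1 + ∑ i, Norm.norm (aa i) with hB
  have hB1 : (1:ℝ) ≤ B := le_add_of_nonneg_right (Finset.sum_nonneg fun i _ => (norm_nonneg _))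
  have hBi : ∀ i, Norm.norm (aa i) ≤ B := by
    intro i
    calc Norm.norm (aa i) ≤ ∑ j, Norm.norm (aa j) :=
          Finset.single_le_sum (fun j _ => norm_nonneg _) (Finset.mem_univ i)
      _ ≤ B := by rw [hB]; linarith
  obtain ⟨ε₀, hε₀pos, hε₀half, hε₀pair⟩ : ∃ ε₀ : ℝ, 0 < ε₀ ∧ ε₀ ≤ 1/2 ∧
      ∀ i j, aa i ≠ 0 → aa i ≠ aa j →
        ε₀ ≤ Norm.norm (aa i - aa j) / (2 * Norm.norm (aa i)) := by
    classical
    set Pairs : Finset (Fin n × Fin n) :=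
      Finset.univ.filter (fun pr => aa pr.1 ≠ 0 ∧ aa pr.1 ≠ aa pr.2) with hPairs
    refine ⟨min (1/2)
      (if hP : Pairs.Nonempty then
        Pairs.inf' hP (fun pr => Norm.norm (aa pr.1 - aa pr.2) / (2 * Norm.norm (aa pr.1)))
      else 1), ?_, min_le_left _ _, ?_⟩
    · apply lt_min (by norm_num)
      split_ifs with hP
      · rw [Finset.lt_inf'_iff]
        intro pr hpr
        rw [hPairs, Finset.mem_filter] at hpr
        have h1 : aa pr.1 ≠ 0 := hpr.2.1
        have h2 : aa pr.1 - aa pr.2 ≠ 0 := sub_ne_zero.2 hpr.2.2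
        have := (norm_pos_iff.2 h2)
        have := (norm_pos_iff.2 h1)
        positivity
      · norm_num
    · intro i j h1 h2
      have hmem : (i, j) ∈ Pairs := by
        rw [hPairs, Finset.mem_filter]
        exact ⟨Finset.mem_univ _, h1, h2⟩
      have hP : Pairs.Nonempty := ⟨(i, j), hmem⟩
      refine le_trans (min_le_right _ _) ?_
      rw [dif_pos hP]
      exact Finset.inf'_le _ hmem
  refine ⟨ε₀, hε₀pos, ?_⟩
  intro ε hε hεlt
  have hε1 : ε ≤ 1 := by linarith
  -- constants depending on ε
  set Ch : ℝ := ∑ ij ∈ c.support, Norm.norm (c ij) * (2*B)^ij.1 with hCh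
  have hChnn : 0 ≤ Ch := Finset.sum_nonneg fun ij _ => by positivity
  set T : Fin n → ℝ := fun i => ∏ j,
    (if aa j = aa i then Norm.norm (aa i) else Norm.norm (aa j - aa i)/2) with hT
  have hTpos : ∀ i, aa i ≠ 0 → 0 < T i := by
    intro i hi
    apply Finset.prod_pos
    intro j _
    split_ifs with hj
    · exact (norm_pos_iff.2 hi)
    · have : aa j - aa i ≠ 0 := sub_ne_zero.2 hj
      have := (norm_pos_iff.2 this)
      linarith
  obtain ⟨δ, hδpos, hδ1, hδle⟩ : ∃ δ : ℝ, 0 < δ ∧ δ ≤ 1 ∧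
      ∀ i : Fin n, aa i ≠ 0 → δ ≤ Norm.norm a₀ * ε^n * T i / (Ch+1) := by
    classical
    set S : Finset (Fin n) := Finset.univ.filter (fun i => aa i ≠ 0) with hS
    refine ⟨min 1
      (if hSne : S.Nonempty then
        S.inf' hSne (fun i => Norm.norm a₀ * ε^n * T i / (Ch+1))
      else 1), ?_, min_le_left _ _, ?_⟩
    · apply lt_min one_pos
      split_ifs with hSne
      · rw [Finset.lt_inf'_iff]
        intro i hi
        rw [hS, Finset.mem_filter] at hi
        have hT' := hTpos i hi.2
        have hCh1 : (0:ℝ) < Ch + 1 := by linarith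
        exact div_pos (mul_pos (mul_pos ((norm_pos_iff.2 ha₀)) (pow_pos hε n)) hT') hCh1
      · norm_num
    · intro i hi
      have hmem : i ∈ S := by rw [hS, Finset.mem_filter]; exact ⟨Finset.mem_univ _, hi⟩
      have hSne : S.Nonempty := ⟨i, hmem⟩
      refine le_trans (min_le_right _ _) ?_
      rw [dif_pos hSne]
      exact Finset.inf'_le _ hmem
  refine ⟨δ, hδpos, ?_⟩
  intro a ha haδ ξ hξ hroot p hp
  have haq : a ^ q ≠ 0 := zpow_ne_zero q ha
  have hgne : gEval q m a₀ aa a ≠ 0 := gEval_ne_zero q m ha₀ aa ha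
  have hξmem : ξ ∈ (gEval q m a₀ aa a).roots := by
    rw [mem_roots hgne]
    exact hroot
  rw [gEval_roots q m ha₀ aa ha, Multiset.mem_map] at hξmem
  obtain ⟨i, _, hvi⟩ := hξmem
  set b : ℂ := aa i with hbdef
  have hbξ : ξ = b * (a ^ q)⁻¹ := hvi.symm
  have hbne : b ≠ 0 := by
    intro h
    rw [h] at hbξ
    simp at hbξ
    exact hξ hbξ
  set ρ : ℝ := ε * Norm.norm ξ with hρ
  have hξpos : 0 < Norm.norm ξ := (norm_pos_iff.2 hξ)
  have hρpos : 0 < ρ := mul_pos hε hξpos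
  have hξq : a ^ q * ξ = b := by
    rw [hbξ, mul_comm b, ← mul_assoc, mul_inv_cancel₀ haq, one_mul]
  have hξabs : Norm.norm ξ = Norm.norm b * (Norm.norm (a ^ q))⁻¹ := by
    rw [hbξ, norm_mul, norm_inv]
  have haqpos : 0 < Norm.norm (a ^ q) := (norm_pos_iff.2 haq)
  have hr1 : Norm.norm a < 1 := lt_of_lt_of_le haδ hδ1
  have hδi : δ ≤ Norm.norm a₀ * ε^n * T i / (Ch+1) := hδle i hbne
  -- the key estimate: |h| < |g| on the sphere
  have hrne : Norm.norm a ≠ 0 := ((norm_pos_iff.2 ha).ne')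
  have hr0 : 0 < Norm.norm a := (norm_pos_iff.2 ha)
  have hCra : Ch * Norm.norm a < Norm.norm a₀ * ε ^ n * T i := by
    have hApos : 0 < Norm.norm a₀ * ε ^ n * T i :=
      mul_pos (mul_pos ((norm_pos_iff.2 ha₀)) (pow_pos hε n)) (hTpos i hbne)
    set A : ℝ := Norm.norm a₀ * ε ^ n * T i with hA
    have hra : Norm.norm a < A / (Ch + 1) := lt_of_lt_of_le haδ hδi
    have hCh1 : (0:ℝ) < Ch + 1 := by linarith
    have h1 : Ch * Norm.norm a ≤ Ch * (A / (Ch + 1)) :=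
      mul_le_mul_of_nonneg_left hra.le hChnn
    have h2 : Ch * (A / (Ch + 1)) < (Ch + 1) * (A / (Ch + 1)) :=
      mul_lt_mul_of_pos_right (by linarith) (div_pos hApos hCh1)
    have h3 : (Ch + 1) * (A / (Ch + 1)) = A := by field_simp
    linarith
  have hRH : ∀ z ∈ Metric.sphere ξ ρ,
      Norm.norm (eval z (hEval c a)) < Norm.norm (eval z (gEval q m a₀ aa a)) := by
    intro z hz
    rw [mem_sphere_iff_norm] at hz
    have hzξ : Norm.norm (z - ξ) = ρ := hz
    -- lower bound on |g(z)|
    have hfac : ∀ j : Fin n,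
        ε * (if aa j = b then Norm.norm b else Norm.norm (aa j - b) / 2) ≤
          Norm.norm (a ^ q * z - aa j) := by
      intro j
      have hdecomp : a ^ q * z - aa j = a ^ q * (z - ξ) + (b - aa j) := by
        rw [mul_sub, hξq]; ring
      have habssc : Norm.norm (a ^ q * (z - ξ)) = ε * Norm.norm b := by
        rw [norm_mul, hzξ, hρ, hξabs]
        field_simp
      by_cases hj : aa j = b
      · rw [if_pos hj, hdecomp, hj, sub_self, add_zero, habssc]
      · rw [if_neg hj, hdecomp]
        have hj' : b ≠ aa j := fun h => hj h.symm
        have hp2 := hε₀pair i j hbne hj'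
        have hbpos := norm_pos_iff.2 hbne
        have hblt : ε * Norm.norm b < Norm.norm (b - aa j) / 2 := by
          have h2 : ε < Norm.norm (b - aa j) / (2 * Norm.norm b) := lt_of_lt_of_le hεlt hp2
          rw [lt_div_iff₀ (by positivity)] at h2
          nlinarith
        have habs : Norm.norm (aa j - b) = Norm.norm (b - aa j) := by
          rw [← neg_sub, norm_neg]
        have htri : Norm.norm (b - aa j) - Norm.norm (a ^ q * (z - ξ)) ≤
            Norm.norm (a ^ q * (z - ξ) + (b - aa j)) := by
          have h4 := norm_sub_norm_le (b - aa j) (-(a ^ q * (z - ξ)))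
          have h5 : (b - aa j) - (-(a ^ q * (z - ξ))) = a ^ q * (z - ξ) + (b - aa j) := by ring
          rw [h5] at h4
          simpa using h4
        have hbnn := norm_nonneg (aa j - b)
        rw [habssc] at htri
        have hle1 : ε * (Norm.norm (aa j - b) / 2) ≤ Norm.norm (aa j - b) / 2 := by
          nlinarith
        rw [habs] at hle1 ⊢
        linarith
    have hglow : Norm.norm a₀ * Norm.norm a ^ m * (ε ^ n * T i) ≤
        Norm.norm (eval z (gEval q m a₀ aa a)) := by
      rw [eval_gEval, norm_mul, norm_mul, norm_pow]
      have hprod : (∏ j : Fin n, Norm.norm (a ^ q * z - aa j)) ≥ ε ^ n * T i := by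
        have h1 : (∏ j : Fin n,
            (ε * (if aa j = b then Norm.norm b else Norm.norm (aa j - b) / 2))) ≤
            ∏ j : Fin n, Norm.norm (a ^ q * z - aa j) := by
          apply Finset.prod_le_prod
          · intro j _
            have hbnn := norm_nonneg (aa j - b)
            have hbnn2 := norm_nonneg b
            split_ifs <;> positivity
          · intro j _
            exact hfac j
        have h2 : (∏ j : Fin n,
            (ε * (if aa j = b then Norm.norm b else Norm.norm (aa j - b) / 2))) =
            ε ^ n * T i := by
          rw [Finset.prod_mul_distrib, Finset.prod_const, Finset.card_univ, Fintype.card_fin]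
        linarith
      have habsprod : Norm.norm (∏ j : Fin n, (a ^ q * z - aa j)) =
          ∏ j : Fin n, Norm.norm (a ^ q * z - aa j) := norm_prod _ _
      rw [habsprod]
      apply mul_le_mul_of_nonneg_left hprod
      exact mul_nonneg (norm_nonneg _) (pow_nonneg (norm_nonneg _) _)
    -- upper bound on |h(z)|
    have hzabs : Norm.norm z ≤ 2 * B * ((Norm.norm a) ^ q)⁻¹ := by
      have htri : Norm.norm z ≤ Norm.norm ξ + Norm.norm (z - ξ) := by
        have h4 := norm_add_le ξ (z - ξ)
        simpa using h4
      have haqr : Norm.norm (a ^ q) = (Norm.norm a) ^ q := norm_zpow a q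
      have hinv : (0:ℝ) ≤ ((Norm.norm a) ^ q)⁻¹ := by positivity
      calc Norm.norm z ≤ Norm.norm ξ + Norm.norm (z - ξ) := htri
        _ = Norm.norm ξ + ε * Norm.norm ξ := by rw [hzξ, hρ]
        _ ≤ 2 * Norm.norm ξ := by nlinarith
        _ = 2 * (Norm.norm b * ((Norm.norm a) ^ q)⁻¹) := by rw [hξabs, haqr]
        _ ≤ 2 * B * ((Norm.norm a) ^ q)⁻¹ := by
            rw [← mul_assoc]
            apply mul_le_mul_of_nonneg_right _ hinv
            have := hBi i
            linarith
    have hterm : ∀ ij ∈ c.support,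
        Norm.norm (c ij * a ^ ij.2 * z ^ ij.1) ≤
          (Norm.norm (c ij) * (2 * B) ^ ij.1) * (Norm.norm a ^ m * Norm.norm a) := by
      intro ij hij
      have hcij := hc ij hij
      have hqpow : (0:ℝ) < (Norm.norm a) ^ q := zpow_pos hr0 q
      rw [norm_mul, norm_mul, norm_pow, norm_zpow]
      calc Norm.norm (c ij) * Norm.norm a ^ ij.2 * Norm.norm z ^ ij.1
          ≤ Norm.norm (c ij) * Norm.norm a ^ ij.2 *
            (2 * B * ((Norm.norm a) ^ q)⁻¹) ^ ij.1 := by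
            apply mul_le_mul_of_nonneg_left _ (by positivity)
            exact pow_le_pow_left₀ (norm_nonneg z) hzabs ij.1
        _ = Norm.norm (c ij) * (2 * B) ^ ij.1 * Norm.norm a ^ (ij.2 - q * ij.1) := by
            rw [mul_pow, ← zpow_neg, ← zpow_natCast ((Norm.norm a) ^ (-q)), ← zpow_mul,
              sub_eq_add_neg, zpow_add₀ hrne]
            ring_nf
        _ ≤ Norm.norm (c ij) * (2 * B) ^ ij.1 * Norm.norm a ^ ((m:ℤ) + 1) := by
            apply mul_le_mul_of_nonneg_left _ (by positivity)
            apply zpow_le_zpow_right_of_le_one₀ hr0 hr1.le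
            omega
        _ = (Norm.norm (c ij) * (2 * B) ^ ij.1) * (Norm.norm a ^ m * Norm.norm a) := by
            rw [zpow_add_one₀ hrne, zpow_natCast]
    have hhsum : Norm.norm (eval z (hEval c a)) ≤ Ch * (Norm.norm a ^ m * Norm.norm a) := by
      rw [eval_hEval]
      calc Norm.norm (∑ ij ∈ c.support, c ij * a ^ ij.2 * z ^ ij.1)
          ≤ ∑ ij ∈ c.support, Norm.norm (c ij * a ^ ij.2 * z ^ ij.1) :=
            norm_sum_le _ _
        _ ≤ ∑ ij ∈ c.support,
            (Norm.norm (c ij) * (2 * B) ^ ij.1) * (Norm.norm a ^ m * Norm.norm a) :=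
            Finset.sum_le_sum hterm
        _ = Ch * (Norm.norm a ^ m * Norm.norm a) := by
            rw [hCh, ← Finset.sum_mul]
    have hfinal : Ch * (Norm.norm a ^ m * Norm.norm a) <
        Norm.norm a₀ * Norm.norm a ^ m * (ε ^ n * T i) := by
      have h0 : (0:ℝ) < Norm.norm a ^ m := pow_pos hr0 m
      have h4 := mul_lt_mul_of_pos_right hCra h0
      calc Ch * (Norm.norm a ^ m * Norm.norm a)
          = Ch * Norm.norm a * Norm.norm a ^ m := by ring
        _ < Norm.norm a₀ * ε ^ n * T i * Norm.norm a ^ m := h4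
        _ = Norm.norm a₀ * Norm.norm a ^ m * (ε ^ n * T i) := by ring
    exact lt_of_le_of_lt hhsum (lt_of_lt_of_le hfinal hglow)
  -- Rouché
  have hRH' : ∀ z ∈ Metric.sphere ξ ρ,
      Norm.norm (eval z (gEval q m a₀ aa a + hEval c a) - eval z (gEval q m a₀ aa a)) <
        Norm.norm (eval z (gEval q m a₀ aa a)) := by
    intro z hz
    rw [eval_add, add_sub_cancel_left]
    exact hRH z hz
  have hcard := rouche (gEval q m a₀ aa a) (gEval q m a₀ aa a + hEval c a) hρpos hRH'
  -- no roots of F on the sphere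
  have hFsph : ∀ z ∈ Metric.sphere ξ ρ, eval z (gEval q m a₀ aa a + hEval c a) ≠ 0 := by
    intro z hz h
    have := hRH' z hz
    rw [h] at this
    rw [zero_sub, norm_neg] at this
    exact lt_irrefl _ this
  have hFne : gEval q m a₀ aa a + hEval c a ≠ 0 := by
    intro h
    apply hFsph (ξ + ρ) (by simp [mem_sphere_iff_norm, abs_of_pos hρpos,
      Complex.norm_real, abs_of_pos hρpos])
    rw [h, eval_zero]
  -- closed-disk filter equals ball filter
  have hfreq : ((gEval q m a₀ aa a + hEval c a).roots.filter
        (fun ξ' => Norm.norm (ξ' - ξ) ≤ ε * Norm.norm ξ)).card =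
      ((gEval q m a₀ aa a + hEval c a).roots.filter
        (fun ζ => ζ ∈ Metric.ball ξ ρ)).card := by
    congr 1
    apply Multiset.filter_congr
    intro ζ hζ
    rw [Metric.mem_ball, Complex.dist_eq]
    constructor
    · intro hle
      rcases lt_or_eq_of_le hle with h | h
      · exact h
      · exfalso
        apply hFsph ζ (by rw [mem_sphere_iff_norm]; exact h)
        exact (Polynomial.isRoot_of_mem_roots hζ)
    · intro hlt
      exact le_of_lt hlt
  -- count of g-roots in the ball equals p
  have hiff : ∀ j : Fin n, (aa j * (a ^ q)⁻¹ ∈ Metric.ball ξ ρ) ↔ aa j = b := by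
    intro j
    rw [Metric.mem_ball, Complex.dist_eq]
    have hdiff : aa j * (a ^ q)⁻¹ - ξ = (aa j - b) * (a ^ q)⁻¹ := by
      rw [hbξ]; ring
    rw [hdiff, norm_mul, norm_inv, hρ, hξabs, ← mul_assoc]
    rw [mul_lt_mul_iff_left₀ (inv_pos.2 haqpos)]
    constructor
    · intro hlt
      by_contra hj
      have hj' : b ≠ aa j := fun h => hj h.symm
      have hp2 := hε₀pair i j hbne hj'
      have hblt : ε * Norm.norm b < Norm.norm (b - aa j) / 2 := by
        have h2 : ε < Norm.norm (b - aa j) / (2 * Norm.norm b) := lt_of_lt_of_le hεlt hp2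
        have hbpos := norm_pos_iff.2 hbne
        rw [lt_div_iff₀ (by positivity)] at h2
        nlinarith
      have habs : Norm.norm (aa j - b) = Norm.norm (b - aa j) := by
        rw [← neg_sub, norm_neg]
      have hbpos' := norm_pos_iff.2 (sub_ne_zero.2 hj')
      rw [habs] at hlt
      linarith
    · intro hj
      rw [hj, sub_self, norm_zero]
      have hbpos := norm_pos_iff.2 hbne
      positivity
  have hgcount : ((gEval q m a₀ aa a).roots.filter
      (fun ζ => ζ ∈ Metric.ball ξ ρ)).card = p := by
    have hp' : p = Multiset.count ξ ((gEval q m a₀ aa a).roots) := by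
      rw [count_roots]; exact hp.symm
    rw [gEval_roots q m ha₀ aa ha, Multiset.count_map] at hp'
    rw [gEval_roots q m ha₀ aa ha, Multiset.filter_map, Multiset.card_map, hp']
    congr 1
    apply Multiset.filter_congr
    intro j _
    rw [Function.comp]
    rw [hiff j]
    constructor
    · intro hj
      rw [hbξ, hj]
    · intro hj
      have : b * (a ^ q)⁻¹ = aa j * (a ^ q)⁻¹ := by rw [← hbξ, hj]
      exact (mul_right_cancel₀ (inv_ne_zero haq) this).symm
  rw [hfreq, hcard, hgcount]
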